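/- Let X = (ℓ²₂, ℓ∞₂) be the couple consisting of ℝ² with the Euclidean norm ‖(x,y)‖₀ = √(x²+y²) and ℝ² with the sup norm ‖(x,y)‖₁ = max(|x|,|y|). Then the K-divisibility constant satisfies γ(X) < (4 + 3√2)/(4 + 2√2). -/

import Mathlib

open Filter Topology

/-- The K-functional for the couple `X = (ℓ²₂, ℓ∞₂)` on `ℝ²`. -/
noncomputable def Kcouple (t : ℝ) (α : ℝ × ℝ) : ℝ :=
  sInf {s : ℝ | ∃ β : ℝ × ℝ,
    s = Real.sqrt ((α.1 - β.1) ^ 2 + (α.2 - β.2) ^ 2) + t * max |β.1| |β.2|}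

/-- `C` is a K-divisibility constant for the couple `X = (ℓ²₂, ℓ∞₂)`. -/
def KDivConst (C : ℝ) : Prop :=
  ∀ (a : ℝ × ℝ) (φ : ℕ → ℝ → ℝ),
    (∀ n t, 0 < t → 0 < φ n t) →
    (∀ n, ConcaveOn ℝ (Set.Ioi (0 : ℝ)) (φ n)) →
    Summable (fun n => φ n 1) →
    (∀ t, 0 < t → Kcouple t a ≤ ∑' n, φ n t) →
    ∃ b : ℕ → ℝ × ℝ,
      Tendsto (fun N => ∑ n ∈ Finset.range N, b n) atTop (𝓝 a) ∧
      ∀ n t, 0 < t → Kcouple t (b n) ≤ C * φ n t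

section helpers

lemma Kset_bddBelow {t : ℝ} (ht : 0 ≤ t) (a : ℝ × ℝ) :
    BddBelow {s : ℝ | ∃ β : ℝ × ℝ,
      s = Real.sqrt ((a.1 - β.1) ^ 2 + (a.2 - β.2) ^ 2) + t * max |β.1| |β.2|} := by
  refine ⟨0, ?_⟩
  rintro x ⟨β, rfl⟩
  have h1 : (0:ℝ) ≤ max |β.1| |β.2| := le_trans (abs_nonneg _) (le_max_left _ _)
  positivity

lemma Kcouple_le {t : ℝ} (ht : 0 ≤ t) (a β : ℝ × ℝ) :
    Kcouple t a ≤ Real.sqrt ((a.1 - β.1) ^ 2 + (a.2 - β.2) ^ 2) + t * max |β.1| |β.2| :=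
  csInf_le (Kset_bddBelow ht a) ⟨β, rfl⟩

lemma le_Kcouple {t : ℝ} (a : ℝ × ℝ) {L : ℝ}
    (h : ∀ β : ℝ × ℝ, L ≤ Real.sqrt ((a.1 - β.1) ^ 2 + (a.2 - β.2) ^ 2) + t * max |β.1| |β.2|) :
    L ≤ Kcouple t a :=
  le_csInf ⟨_, ⟨0, rfl⟩⟩ (by rintro x ⟨β, rfl⟩; exact h β)

lemma Kcouple_nonneg {t : ℝ} (ht : 0 ≤ t) (a : ℝ × ℝ) : 0 ≤ Kcouple t a :=
  le_Kcouple a (fun β => by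
    have h1 : (0:ℝ) ≤ max |β.1| |β.2| := le_trans (abs_nonneg _) (le_max_left _ _)
    positivity)

lemma Kcouple_le_sqrt {t : ℝ} (ht : 0 ≤ t) (a : ℝ × ℝ) :
    Kcouple t a ≤ Real.sqrt (a.1 ^ 2 + a.2 ^ 2) := by
  have := Kcouple_le ht a 0
  simpa using this

lemma Kcouple_le_mul {t : ℝ} (ht : 0 ≤ t) (a : ℝ × ℝ) :
    Kcouple t a ≤ t * max |a.1| |a.2| := by
  have := Kcouple_le ht a a
  simpa using this

/-- A positive concave function on `(0,∞)` is nondecreasing. -/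
lemma concave_pos_mono {φ : ℝ → ℝ} (hc : ConcaveOn ℝ (Set.Ioi 0) φ)
    (hp : ∀ t, 0 < t → 0 < φ t) {u v : ℝ} (hu : 0 < u) (huv : u ≤ v) : φ u ≤ φ v := by
  rcases huv.eq_or_lt with h | hlt
  · rw [h]
  by_contra hcon
  push_neg at hcon
  set d : ℝ := φ u - φ v with hd_def
  have hd : 0 < d := by simp only [hd_def]; linarith
  set w : ℝ := max (v + 1) ((v * φ u - u * φ v) / d + 1) with hw_def
  have hwv : v < w := lt_of_lt_of_le (by linarith) (le_max_left _ _)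
  have hw2 : (v * φ u - u * φ v) / d + 1 ≤ w := le_max_right _ _
  have hwu : u < w := hlt.trans hwv
  have hwupos : 0 < w - u := by linarith
  have hwune : w - u ≠ 0 := hwupos.ne'
  have hw0 : 0 < w := hu.trans hwu
  have hφw : 0 < φ w := hp w hw0
  have hA : (0:ℝ) ≤ (w - v) / (w - u) := by
    apply div_nonneg <;> linarith
  have hB : (0:ℝ) ≤ (v - u) / (w - u) := by
    apply div_nonneg <;> linarith
  have hAB : (w - v) / (w - u) + (v - u) / (w - u) = 1 := by
    rw [← add_div, div_eq_one_iff_eq hwune]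
    ring
  have hcomb := hc.2 (Set.mem_Ioi.mpr hu) (Set.mem_Ioi.mpr hw0) hA hB hAB
  simp only [smul_eq_mul] at hcomb
  have hpt : (w - v) / (w - u) * u + (v - u) / (w - u) * w = v := by
    rw [div_mul_eq_mul_div, div_mul_eq_mul_div, ← add_div, div_eq_iff hwune]
    ring
  rw [hpt] at hcomb
  have hmul := mul_le_mul_of_nonneg_left hcomb hwupos.le
  have heq : (w - u) * ((w - v) / (w - u) * φ u + (v - u) / (w - u) * φ w)
      = (w - v) * φ u + (v - u) * φ w := by
    field_simp
  rw [heq] at hmul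
  have hwd : v * φ u - u * φ v < w * d := by
    have h3 : (v * φ u - u * φ v) / d * d = v * φ u - u * φ v := div_mul_cancel₀ _ hd.ne'
    nlinarith [mul_le_mul_of_nonneg_right hw2 hd.le]
  nlinarith

/-- A positive concave function on `(0,∞)` satisfies `(u/v) φ(v) ≤ φ(u)` for `0 < u ≤ v`. -/
lemma concave_pos_scale {φ : ℝ → ℝ} (hc : ConcaveOn ℝ (Set.Ioi 0) φ)
    (hp : ∀ t, 0 < t → 0 < φ t) {u v : ℝ} (hu : 0 < u) (huv : u ≤ v) :
    u / v * φ v ≤ φ u := by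
  rcases huv.eq_or_lt with h | hlt
  · subst h
    rw [div_self hu.ne']
    simp
  have hv : 0 < v := hu.trans hlt
  have key : ∀ ε ∈ Set.Ioo (0:ℝ) u, (u - ε) / (v - ε) * φ v ≤ φ u := by
    intro ε hε
    obtain ⟨hε0, hεu⟩ := hε
    have hεv : ε < v := hεu.trans hlt
    have hvε : 0 < v - ε := by linarith
    have hvεne : v - ε ≠ 0 := hvε.ne'
    have hA : (0:ℝ) ≤ (v - u) / (v - ε) := by
      apply div_nonneg <;> linarith
    have hB : (0:ℝ) ≤ (u - ε) / (v - ε) := by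
      apply div_nonneg <;> linarith
    have hAB : (v - u) / (v - ε) + (u - ε) / (v - ε) = 1 := by
      rw [← add_div, div_eq_one_iff_eq hvεne]
      ring
    have hcomb := hc.2 (Set.mem_Ioi.mpr hε0) (Set.mem_Ioi.mpr hv) hA hB hAB
    simp only [smul_eq_mul] at hcomb
    have hpt : (v - u) / (v - ε) * ε + (u - ε) / (v - ε) * v = u := by
      rw [div_mul_eq_mul_div, div_mul_eq_mul_div, ← add_div, div_eq_iff hvεne]
      ring
    rw [hpt] at hcomb
    have h1 : 0 ≤ (v - u) / (v - ε) * φ ε :=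
      mul_nonneg hA (hp ε hε0).le
    linarith
  have tend : Filter.Tendsto (fun ε : ℝ => (u - ε) / (v - ε) * φ v) (nhdsWithin 0 (Set.Ioi 0))
      (nhds (u / v * φ v)) := by
    have hcont : ContinuousAt (fun ε : ℝ => (u - ε) / (v - ε) * φ v) 0 := by
      have h1 : ContinuousAt (fun ε : ℝ => (u - ε) / (v - ε)) 0 := by
        apply ContinuousAt.div
        · exact continuousAt_const.sub continuousAt_id
        · exact continuousAt_const.sub continuousAt_id
        · simpa using hv.ne'
      exact h1.mul continuousAt_const
    have := hcont.tendsto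
    simp only [sub_zero] at this
    exact this.mono_left nhdsWithin_le_nhds
  refine le_of_tendsto tend ?_
  filter_upwards [Ioo_mem_nhdsGT_of_mem (Set.mem_Ico.mpr ⟨le_refl (0:ℝ), hu⟩)] with ε hε
  exact key ε hε

lemma sqrt_tri (x1 x2 y1 y2 : ℝ) :
    Real.sqrt ((x1 + y1) ^ 2 + (x2 + y2) ^ 2) ≤
      Real.sqrt (x1 ^ 2 + x2 ^ 2) + Real.sqrt (y1 ^ 2 + y2 ^ 2) := by
  set u := Real.sqrt (x1 ^ 2 + x2 ^ 2) with hu_def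
  set w := Real.sqrt (y1 ^ 2 + y2 ^ 2) with hw_def
  have hu0 : 0 ≤ u := Real.sqrt_nonneg _
  have hw0 : 0 ≤ w := Real.sqrt_nonneg _
  have hu : u ^ 2 = x1 ^ 2 + x2 ^ 2 := Real.sq_sqrt (by positivity)
  have hw : w ^ 2 = y1 ^ 2 + y2 ^ 2 := Real.sq_sqrt (by positivity)
  have hcs : x1 * y1 + x2 * y2 ≤ u * w := by
    nlinarith [sq_nonneg (x1 * y2 - x2 * y1), sq_nonneg (u * w - x1 * y1 - x2 * y2),
      mul_nonneg hu0 hw0]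
  calc Real.sqrt ((x1 + y1) ^ 2 + (x2 + y2) ^ 2)
      ≤ Real.sqrt ((u + w) ^ 2) := Real.sqrt_le_sqrt (by nlinarith)
    _ = u + w := Real.sqrt_sq (by positivity)

lemma abs_le_sqrt_left (x y : ℝ) : |x| ≤ Real.sqrt (x ^ 2 + y ^ 2) := by
  rw [← Real.sqrt_sq_eq_abs]
  exact Real.sqrt_le_sqrt (by nlinarith [sq_nonneg y])

lemma abs_le_sqrt_right (x y : ℝ) : |y| ≤ Real.sqrt (x ^ 2 + y ^ 2) := by
  rw [← Real.sqrt_sq_eq_abs]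
  exact Real.sqrt_le_sqrt (by nlinarith [sq_nonneg x])

lemma sqrt_le_sqrt2_max (x y : ℝ) :
    Real.sqrt (x ^ 2 + y ^ 2) ≤ Real.sqrt 2 * max |x| |y| := by
  have h1 : x ^ 2 + y ^ 2 ≤ 2 * (max |x| |y|) ^ 2 := by
    have hx : |x| ≤ max |x| |y| := le_max_left _ _
    have hy : |y| ≤ max |x| |y| := le_max_right _ _
    nlinarith [abs_nonneg x, abs_nonneg y, sq_abs x, sq_abs y]
  calc Real.sqrt (x ^ 2 + y ^ 2) ≤ Real.sqrt (2 * (max |x| |y|) ^ 2) := Real.sqrt_le_sqrt h1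
    _ = Real.sqrt 2 * max |x| |y| := by
        rw [Real.sqrt_mul (by norm_num), Real.sqrt_sq (le_trans (abs_nonneg x) (le_max_left _ _))]

end helpers

/-- The constant `2^(1/4)` is a K-divisibility constant for the couple. -/
lemma kdiv_main : KDivConst (Real.sqrt (Real.sqrt 2)) := by
  intro a φ hpos hconc hsum hK
  set C := Real.sqrt (Real.sqrt 2) with hC_def
  have h2pos : (0:ℝ) < Real.sqrt 2 := Real.sqrt_pos.mpr (by norm_num)
  have hCpos : 0 < C := Real.sqrt_pos.mpr h2pos
  have hC2 : C ^ 2 = Real.sqrt 2 := Real.sq_sqrt h2pos.le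
  by_cases ha : a = 0
  · subst ha
    refine ⟨fun _ => 0, ?_, ?_⟩
    · simpa using tendsto_const_nhds
    · intro n t ht
      have h0 : Kcouple t (0 : ℝ × ℝ) ≤ 0 := by
        have := Kcouple_le_sqrt ht.le (0 : ℝ × ℝ)
        simpa using this
      have := hpos n t ht
      nlinarith
  -- nontrivial case
  set M := max |a.1| |a.2| with hM_def
  set N := Real.sqrt (a.1 ^ 2 + a.2 ^ 2) with hN_def
  have hM : 0 < M := by
    rcases lt_or_ge 0 M with h | h
    · exact h
    exfalso
    apply ha
    have h1 : |a.1| = 0 :=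
      le_antisymm (le_trans (le_max_left _ _) h) (abs_nonneg _)
    have h2 : |a.2| = 0 :=
      le_antisymm (le_trans (le_max_right _ _) h) (abs_nonneg _)
    have : a = (a.1, a.2) := rfl
    rw [this, abs_eq_zero.mp h1, abs_eq_zero.mp h2]
    rfl
  have hMN : M ≤ N := max_le (abs_le_sqrt_left _ _) (abs_le_sqrt_right _ _)
  have hN : 0 < N := lt_of_lt_of_le hM hMN
  have hN2 : N ≤ Real.sqrt 2 * M := sqrt_le_sqrt2_max a.1 a.2
  set s := N / M with hs_def
  have hs1 : 1 ≤ s := (one_le_div hM).mpr hMN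
  have hspos : 0 < s := lt_of_lt_of_le one_pos hs1
  have hs2 : s ≤ Real.sqrt 2 := (div_le_iff₀ hM).mpr hN2
  have hsM : s * M = N := div_mul_cancel₀ N hM.ne'
  -- lower bounds for K(s, a)
  have hKsM : M ≤ Kcouple s a := by
    apply le_Kcouple
    intro β
    have e1 : |a.1 - β.1| ≤ Real.sqrt ((a.1 - β.1) ^ 2 + (a.2 - β.2) ^ 2) :=
      abs_le_sqrt_left _ _
    have e2 : |a.2 - β.2| ≤ Real.sqrt ((a.1 - β.1) ^ 2 + (a.2 - β.2) ^ 2) :=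
      abs_le_sqrt_right _ _
    have hmax : (0:ℝ) ≤ max |β.1| |β.2| := le_trans (abs_nonneg _) (le_max_left _ _)
    have e3 : max |β.1| |β.2| ≤ s * max |β.1| |β.2| := le_mul_of_one_le_left hmax hs1
    have t1 : |a.1| ≤ |a.1 - β.1| + |β.1| := by
      have := abs_add_le (a.1 - β.1) β.1
      rw [sub_add_cancel] at this
      exact this
    have t2 : |a.2| ≤ |a.2 - β.2| + |β.2| := by
      have := abs_add_le (a.2 - β.2) β.2
      rw [sub_add_cancel] at this
      exact this
    apply max_le
    · have : |β.1| ≤ s * max |β.1| |β.2| := le_trans (le_max_left _ _) e3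
      linarith
    · have : |β.2| ≤ s * max |β.1| |β.2| := le_trans (le_max_right _ _) e3
      linarith
  have hKsN : s / Real.sqrt 2 * N ≤ Kcouple s a := by
    apply le_Kcouple
    intro β
    set D := Real.sqrt ((a.1 - β.1) ^ 2 + (a.2 - β.2) ^ 2) with hD_def
    set m := max |β.1| |β.2| with hm_def
    have hD : 0 ≤ D := Real.sqrt_nonneg _
    have hm : 0 ≤ m := le_trans (abs_nonneg _) (le_max_left _ _)
    have htri : N ≤ D + Real.sqrt (β.1 ^ 2 + β.2 ^ 2) := by
      have := sqrt_tri (a.1 - β.1) (a.2 - β.2) β.1 β.2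
      rw [sub_add_cancel, sub_add_cancel] at this
      exact this
    have hβ : Real.sqrt (β.1 ^ 2 + β.2 ^ 2) ≤ Real.sqrt 2 * m := sqrt_le_sqrt2_max _ _
    have h : N ≤ D + Real.sqrt 2 * m := by linarith
    rw [div_mul_eq_mul_div, div_le_iff₀ h2pos]
    nlinarith [mul_le_mul_of_nonneg_left h hspos.le, mul_le_mul_of_nonneg_right hs2 hD,
      mul_nonneg hspos.le hm]
  have hCN : N ≤ C * Kcouple s a := by
    rcases le_or_gt N (C * M) with hx | hx
    · exact hx.trans (mul_le_mul_of_nonneg_left hKsM hCpos.le)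
    · have hsC : C < s := (lt_div_iff₀ hM).mpr hx
      have h9 : N ≤ C * (s / Real.sqrt 2 * N) := by
        rw [show C * (s / Real.sqrt 2 * N) = C * s * N / Real.sqrt 2 by ring,
          le_div_iff₀ h2pos]
        nlinarith [mul_nonneg (mul_nonneg hN.le hCpos.le) (sub_nonneg.mpr hsC.le)]
      exact h9.trans (mul_le_mul_of_nonneg_left hKsN hCpos.le)
  set T := ∑' n, φ n s with hT_def
  have hφs_le : ∀ n, φ n s ≤ s * φ n 1 := by
    intro n
    have h1 := concave_pos_scale (hconc n) (hpos n) one_pos hs1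
    have e : s * (1 / s * φ n s) = φ n s := by
      field_simp
    nlinarith [mul_le_mul_of_nonneg_left h1 hspos.le]
  have hsummable : Summable (fun n => φ n s) :=
    Summable.of_nonneg_of_le (fun n => (hpos n s hspos).le) hφs_le (hsum.mul_left s)
  have hTK : Kcouple s a ≤ T := hK s hspos
  have hTM : M ≤ T := hKsM.trans hTK
  have hTpos : 0 < T := hM.trans_le hTM
  have hNT : N ≤ C * T := hCN.trans (mul_le_mul_of_nonneg_left hTK hCpos.le)
  refine ⟨fun n => (φ n s / T) • a, ?_, ?_⟩
  · have h1 : Tendsto (fun Nf => ∑ n ∈ Finset.range Nf, φ n s / T) atTop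
        (𝓝 (∑' n, φ n s / T)) := (hsummable.div_const T).hasSum.tendsto_sum_nat
    have h2 : (∑' n, φ n s / T) = 1 := by
      rw [tsum_div_const]
      exact div_self hTpos.ne'
    rw [h2] at h1
    have h3 := h1.smul_const a
    rw [one_smul] at h3
    exact h3.congr (fun Nf => by rw [Finset.sum_smul])
  · intro n t ht
    set c := φ n s / T with hc_def
    have hc : 0 < c := div_pos (hpos n s hspos) hTpos
    have hb1 : ((φ n s / T) • a).1 = c * a.1 := rfl
    have hb2 : ((φ n s / T) • a).2 = c * a.2 := rfl
    have k1 : Kcouple t ((φ n s / T) • a) ≤ c * N := by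
      have h := Kcouple_le_sqrt ht.le ((φ n s / T) • a)
      rw [hb1, hb2] at h
      have e : Real.sqrt ((c * a.1) ^ 2 + (c * a.2) ^ 2) = c * N := by
        rw [show (c * a.1) ^ 2 + (c * a.2) ^ 2 = c ^ 2 * (a.1 ^ 2 + a.2 ^ 2) by ring,
          Real.sqrt_mul (sq_nonneg c), Real.sqrt_sq hc.le]
      rw [e] at h
      exact h
    have k2 : Kcouple t ((φ n s / T) • a) ≤ t * (c * M) := by
      have h := Kcouple_le_mul ht.le ((φ n s / T) • a)
      rw [hb1, hb2] at h
      have e : max |c * a.1| |c * a.2| = c * M := by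
        rw [abs_mul, abs_mul, abs_of_pos hc]
        exact ((monotone_mul_left_of_nonneg hc.le).map_max).symm
      rw [e] at h
      exact h
    rcases le_or_gt s t with hst | hts
    · have hφ : φ n s ≤ φ n t := concave_pos_mono (hconc n) (hpos n) hspos hst
      have h5 : c * N ≤ C * φ n s := by
        rw [hc_def, div_mul_eq_mul_div, div_le_iff₀ hTpos]
        nlinarith [mul_le_mul_of_nonneg_left hNT (hpos n s hspos).le]
      calc Kcouple t ((φ n s / T) • a) ≤ c * N := k1
        _ ≤ C * φ n s := h5
        _ ≤ C * φ n t := mul_le_mul_of_nonneg_left hφ hCpos.le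
    · have hφ : t / s * φ n s ≤ φ n t := concave_pos_scale (hconc n) (hpos n) ht hts.le
      have h5 : t * (c * M) ≤ C * (t / s * φ n s) := by
        rw [show t * (c * M) = t * φ n s * M / T by rw [hc_def]; ring,
          show C * (t / s * φ n s) = C * t * φ n s / s by ring,
          div_le_div_iff₀ hTpos hspos]
        calc t * φ n s * M * s = t * φ n s * N := by rw [← hsM]; ring
          _ ≤ t * φ n s * (C * T) :=
              mul_le_mul_of_nonneg_left hNT (mul_pos ht (hpos n s hspos)).le
          _ = C * t * φ n s * T := by ring
      calc Kcouple t ((φ n s / T) • a) ≤ t * (c * M) := k2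
        _ ≤ C * (t / s * φ n s) := h5
        _ ≤ C * φ n t := mul_le_mul_of_nonneg_left hφ hCpos.le

lemma kdiv_nonneg {c : ℝ} (h : KDivConst c) : 0 ≤ c := by
  have h1 : ∀ (n : ℕ) (t : ℝ), 0 < t → 0 < (fun n t => (1/2 : ℝ) ^ (n+1) * t) n t := by
    intro n t ht
    positivity
  have h2 : ∀ n : ℕ, ConcaveOn ℝ (Set.Ioi (0:ℝ)) ((fun n t => (1/2 : ℝ) ^ (n+1) * t) n) := by
    intro n
    exact ⟨convex_Ioi 0, by
      intro x _ y _ p q hp hq hpq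
      simp only [smul_eq_mul]
      exact le_of_eq (by ring)⟩
  have h3 : Summable (fun n : ℕ => (fun n t => (1/2 : ℝ) ^ (n+1) * t) n 1) := by
    simp only [mul_one]
    refine (summable_geometric_two.mul_left (1/2)).congr (fun n => ?_)
    rw [pow_succ]
    ring
  have h4 : ∀ t, 0 < t → Kcouple t ((1:ℝ), (0:ℝ)) ≤ ∑' n : ℕ, (1/2 : ℝ) ^ (n+1) * t := by
    intro t ht
    have hsum1 : ∑' n : ℕ, (1/2 : ℝ) ^ (n+1) * t = t := by
      rw [tsum_mul_right]
      have he : ∑' n : ℕ, (1/2 : ℝ) ^ (n+1) = 1 := by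
        calc ∑' n : ℕ, (1/2 : ℝ) ^ (n+1) = ∑' n : ℕ, (1/2 : ℝ) * (1/2) ^ n := by
              apply tsum_congr
              intro n
              rw [pow_succ]
              ring
          _ = (1/2 : ℝ) * ∑' n : ℕ, (1/2 : ℝ) ^ n := tsum_mul_left
          _ = 1 := by rw [tsum_geometric_two]; norm_num
      rw [he, one_mul]
    rw [hsum1]
    have := Kcouple_le_mul ht.le ((1:ℝ), (0:ℝ))
    simpa using this
  obtain ⟨b, -, hb⟩ := h ((1:ℝ), (0:ℝ)) (fun n t => (1/2 : ℝ) ^ (n+1) * t) h1 h2 h3 h4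
  have h5 := hb 0 1 one_pos
  have h6 := Kcouple_nonneg (le_of_lt one_pos) (b 0)
  simp only [pow_one, mul_one, zero_add] at h5
  nlinarith

/-- The K-divisibility constant of the couple `(ℓ²₂, ℓ∞₂)` is strictly less than
`(4 + 3√2)/(4 + 2√2)`. -/
theorem gamma_X_lt : sInf {C : ℝ | KDivConst C} <
    (4 + 3 * Real.sqrt 2) / (4 + 2 * Real.sqrt 2) := by
  have hbdd : BddBelow {C : ℝ | KDivConst C} := ⟨0, fun c hc => kdiv_nonneg hc⟩
  refine lt_of_le_of_lt (csInf_le hbdd kdiv_main) ?_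
  have h2pos : (0:ℝ) < Real.sqrt 2 := Real.sqrt_pos.mpr (by norm_num)
  have e2 : Real.sqrt 2 ^ 2 = 2 := Real.sq_sqrt (by norm_num)
  set q := Real.sqrt (Real.sqrt 2) with hq_def
  have hq0 : 0 ≤ q := Real.sqrt_nonneg _
  have hq : q ^ 2 = Real.sqrt 2 := Real.sq_sqrt h2pos.le
  have hub : Real.sqrt 2 < 1.4143 := by nlinarith [Real.sqrt_nonneg 2]
  have hlb : (1.414 : ℝ) < Real.sqrt 2 := by nlinarith [Real.sqrt_nonneg 2]
  have hqub : q < 1.19 := by nlinarith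
  have hqlb : (1.18 : ℝ) < q := by nlinarith
  rw [lt_div_iff₀ (by linarith)]
  rw [← hq]
  nlinarith [mul_pos (sub_pos.mpr hqub) (sub_pos.mpr hqlb),
    mul_nonneg (mul_nonneg (sub_pos.mpr hqub).le (sub_pos.mpr hqlb).le) (sub_pos.mpr hqub).le,
    mul_nonneg (mul_nonneg (sub_pos.mpr hqub).le (sub_pos.mpr hqlb).le) (sub_pos.mpr hqlb).le]
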